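/- arXiv:math/0405502 — 3 statements merged into one kernel-verified Lean document; each statement's English description precedes it below -/
import Mathlib

section
/- In B_{g,n} (with n ≥ 2), defining b_i := a_i a_{i+1} ⋯ a_g for 1 ≤ i ≤ g, the relation b_i σ_1 b_r σ_1 = σ_1 b_r σ_1 b_i holds for all 1 ≤ r ≤ i ≤ g. -/
/-- Generators of the handlebody braid group `B_{g,n}`: `Sum.inl i` is the loop
generator `a_{i+1}` (0-based index `i`), `Sum.inr k` is the braid crossing
`σ_{k+1}` (0-based index `k`). -/
abbrev HGen (g n : ℕ) := Fin g ⊕ Fin (n - 1)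

def fa (g n : ℕ) (i : Fin g) : FreeGroup (HGen g n) := FreeGroup.of (Sum.inl i)
def fs (g n : ℕ) (k : Fin (n - 1)) : FreeGroup (HGen g n) := FreeGroup.of (Sum.inr k)

/-- The defining relators of the handlebody braid group `B_{g,n}`. -/
def hrels (g n : ℕ) : Set (FreeGroup (HGen g n)) :=
  { r | (∃ j k : Fin (n - 1), (j : ℕ) + 1 < (k : ℕ) ∧
          r = fs g n k * fs g n j * (fs g n j * fs g n k)⁻¹) ∨
        (∃ (k : Fin (n - 1)) (h : (k : ℕ) + 1 < n - 1),
          r = fs g n k * fs g n ⟨(k : ℕ) + 1, h⟩ * fs g n k *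
              (fs g n ⟨(k : ℕ) + 1, h⟩ * fs g n k * fs g n ⟨(k : ℕ) + 1, h⟩)⁻¹) ∨
        (∃ (i : Fin g) (k : Fin (n - 1)), 1 ≤ (k : ℕ) ∧
          r = fa g n i * fs g n k * (fs g n k * fa g n i)⁻¹) ∨
        (∃ (i : Fin g) (h : 0 < n - 1),
          r = fa g n i * fs g n ⟨0, h⟩ * fa g n i * fs g n ⟨0, h⟩ *
              (fs g n ⟨0, h⟩ * fa g n i * fs g n ⟨0, h⟩ * fa g n i)⁻¹) ∨
        (∃ (i r' : Fin g) (h : 0 < n - 1), (r' : ℕ) < (i : ℕ) ∧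
          r = fa g n i * (fs g n ⟨0, h⟩ * fa g n r' * (fs g n ⟨0, h⟩)⁻¹) *
              ((fs g n ⟨0, h⟩ * fa g n r' * (fs g n ⟨0, h⟩)⁻¹) * fa g n i)⁻¹) }

/-- The handlebody braid group `B_{g,n}`. -/
abbrev HB (g n : ℕ) := PresentedGroup (hrels g n)

/-- The loop generator `a_{i+1}` of `B_{g,n}` (0-based index). -/
def aa (g n : ℕ) (i : Fin g) : HB g n := PresentedGroup.of (Sum.inl i)

/-- The braid generator `σ_{k+1}` of `B_{g,n}` (0-based index). -/
def ss (g n : ℕ) (k : Fin (n - 1)) : HB g n := PresentedGroup.of (Sum.inr k)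

lemma hrel_one (g n : ℕ) {r : FreeGroup (HGen g n)} (hr : r ∈ hrels g n) :
    PresentedGroup.mk (hrels g n) r = 1 := by
  have : r ∈ Subgroup.normalClosure (hrels g n) := Subgroup.subset_normalClosure hr
  exact (QuotientGroup.eq_one_iff r).2 this

/-- The inclusion of generators of `B_{g,n}` into those of `B_{g,n+1}`. -/
def castGen (g n : ℕ) : HGen g n → HGen g (n + 1) :=
  Sum.map id (fun k => ⟨(k : ℕ), by omega⟩)

lemma inc_aux (g n : ℕ) : ∀ r ∈ hrels g n,
    FreeGroup.lift (fun x => (PresentedGroup.of (castGen g n x) : HB g (n + 1))) r = 1 := by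
  intro r hr
  rcases hr with ⟨j, k, hjk, rfl⟩ | ⟨k, h, rfl⟩ | ⟨i, k, hk, rfl⟩ | ⟨i, h, rfl⟩ |
    ⟨i, r', h, hri, rfl⟩
  · have := hrel_one g (n + 1) (r := fs g (n+1) ⟨k, by omega⟩ * fs g (n+1) ⟨j, by omega⟩ *
      (fs g (n+1) ⟨j, by omega⟩ * fs g (n+1) ⟨k, by omega⟩)⁻¹)
      (Or.inl ⟨⟨j, by omega⟩, ⟨k, by omega⟩, by simpa using hjk, rfl⟩)
    simpa [fa, fs, castGen, PresentedGroup.of, PresentedGroup.mk] using this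
  · have := hrel_one g (n + 1) (r := fs g (n+1) ⟨k, by omega⟩ * fs g (n+1) ⟨(k:ℕ)+1, by omega⟩ *
      fs g (n+1) ⟨k, by omega⟩ *
      (fs g (n+1) ⟨(k:ℕ)+1, by omega⟩ * fs g (n+1) ⟨k, by omega⟩ * fs g (n+1) ⟨(k:ℕ)+1, by omega⟩)⁻¹)
      (Or.inr (Or.inl ⟨⟨k, by omega⟩, by simp only [Fin.val_mk]; omega, rfl⟩))
    simpa [fa, fs, castGen, PresentedGroup.of, PresentedGroup.mk] using this
  · have := hrel_one g (n + 1) (r := fa g (n+1) i * fs g (n+1) ⟨k, by omega⟩ *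
      (fs g (n+1) ⟨k, by omega⟩ * fa g (n+1) i)⁻¹)
      (Or.inr (Or.inr (Or.inl ⟨i, ⟨k, by omega⟩, by simpa using hk, rfl⟩)))
    simpa [fa, fs, castGen, PresentedGroup.of, PresentedGroup.mk] using this
  · have := hrel_one g (n + 1) (r := fa g (n+1) i * fs g (n+1) ⟨0, by omega⟩ * fa g (n+1) i *
      fs g (n+1) ⟨0, by omega⟩ *
      (fs g (n+1) ⟨0, by omega⟩ * fa g (n+1) i * fs g (n+1) ⟨0, by omega⟩ * fa g (n+1) i)⁻¹)
      (Or.inr (Or.inr (Or.inr (Or.inl ⟨i, by omega, rfl⟩))))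
    simpa [fa, fs, castGen, PresentedGroup.of, PresentedGroup.mk] using this
  · have := hrel_one g (n + 1) (r := fa g (n+1) i *
      (fs g (n+1) ⟨0, by omega⟩ * fa g (n+1) r' * (fs g (n+1) ⟨0, by omega⟩)⁻¹) *
      ((fs g (n+1) ⟨0, by omega⟩ * fa g (n+1) r' * (fs g (n+1) ⟨0, by omega⟩)⁻¹) * fa g (n+1) i)⁻¹)
      (Or.inr (Or.inr (Or.inr (Or.inr ⟨i, r', by omega, hri, rfl⟩))))
    simpa [fa, fs, castGen, PresentedGroup.of, PresentedGroup.mk] using this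

/-- The natural inclusion `B_{g,n} → B_{g,n+1}` adding an unlinked strand on the right. -/
def inc (g n : ℕ) : HB g n →* HB g (n + 1) :=
  PresentedGroup.toGroup (inc_aux g n)

@[simp] lemma inc_aa (g n : ℕ) (i : Fin g) : inc g n (aa g n i) = aa g (n + 1) i :=
  PresentedGroup.toGroup.of _

@[simp] lemma inc_ss (g n : ℕ) (k : Fin (n - 1)) :
    inc g n (ss g n k) = ss g (n + 1) ⟨(k : ℕ), by omega⟩ :=
  PresentedGroup.toGroup.of _

/-- `bbN g n i` is the loop `b_{i+1} = a_{i+1} a_{i+2} ⋯ a_g` (0-based index `i`);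
for `i ≥ g` it is the empty product `1`. -/
def bbN (g n : ℕ) (i : ℕ) : HB g n :=
  (((List.finRange g).filter (fun j : Fin g => decide (i ≤ (j : ℕ)))).map (aa g n)).prod

/-- The maximal loop `ω = a_1 a_2 ⋯ a_g` in `B_{g,n}`. -/
def maxLoop (g n : ℕ) : HB g n := ((List.finRange g).map (aa g n)).prod

/-- One Markov move on the disjoint union `⋃_{n} B_{g,n}`:
stabilization `β₁β₂ ↦ β₁ σ_n^{±1} β₂` and conjugation by a braid generator. -/
inductive MStep (g : ℕ) : (Σ n, HB g n) → (Σ n, HB g n) → Prop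
  | stab {n : ℕ} (hn : 1 ≤ n) (β₁ β₂ : HB g n) (z : ℤ) (hz : z = 1 ∨ z = -1) :
      MStep g ⟨n, β₁ * β₂⟩
        ⟨n + 1, inc g n β₁ * (ss g (n + 1) ⟨n - 1, by omega⟩) ^ z * inc g n β₂⟩
  | conj {n : ℕ} (β : HB g n) (i : Fin (n - 1)) :
      MStep g ⟨n, (ss g n i)⁻¹ * β * ss g n i⟩ ⟨n, β⟩

/-- Markov equivalence: the smallest equivalence relation generated by the Markov moves. -/
def MarkovEq (g : ℕ) : (Σ n, HB g n) → (Σ n, HB g n) → Prop :=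
  Relation.EqvGen (MStep g)

/-- `σ_j` in `B_{g,n+1}` (1-based index `j`, the value `1` if `j` is out of range). -/
def sword (g n : ℕ) (j : ℕ) : HB g (n + 1) :=
  if h : 1 ≤ j ∧ j ≤ n then ss g (n + 1) ⟨j - 1, by omega⟩ else 1

/-- The ascending product `σ_lo σ_{lo+1} ⋯ σ_hi` in `B_{g,n+1}`. -/
def sasc (g n lo hi : ℕ) : HB g (n + 1) :=
  ((List.range' lo (hi + 1 - lo)).map (sword g n)).prod

/-- The descending product `σ_hi σ_{hi-1} ⋯ σ_lo` in `B_{g,n+1}`. -/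
def sdesc (g n lo hi : ℕ) : HB g (n + 1) :=
  ((List.range' lo (hi + 1 - lo)).reverse.map (sword g n)).prod

namespace Scratch

lemma rel4 (g n : ℕ) (h : 0 < n - 1) (i : Fin g) :
    aa g n i * ss g n ⟨0, h⟩ * aa g n i * ss g n ⟨0, h⟩ =
      ss g n ⟨0, h⟩ * aa g n i * ss g n ⟨0, h⟩ * aa g n i := by
  have h1 := hrel_one g n (Or.inr (Or.inr (Or.inr (Or.inl ⟨i, h, rfl⟩))))
  rw [map_mul, map_inv, mul_inv_eq_one] at h1
  simpa [fa, fs, aa, ss, PresentedGroup.of, PresentedGroup.mk, mul_assoc] using h1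

lemma rel5 (g n : ℕ) (h : 0 < n - 1) {i r : Fin g} (hr : (r : ℕ) < i) :
    aa g n i * (ss g n ⟨0, h⟩ * aa g n r * (ss g n ⟨0, h⟩)⁻¹) =
      (ss g n ⟨0, h⟩ * aa g n r * (ss g n ⟨0, h⟩)⁻¹) * aa g n i := by
  have h1 := hrel_one g n (Or.inr (Or.inr (Or.inr (Or.inr ⟨i, r, h, hr, rfl⟩))))
  rw [map_mul, map_inv, mul_inv_eq_one] at h1
  simpa [fa, fs, aa, ss, PresentedGroup.of, PresentedGroup.mk, mul_assoc] using h1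

lemma filter_finRange (g m : ℕ) :
    (List.finRange g).filter (fun j : Fin g => decide (m ≤ (j : ℕ))) =
      (List.finRange g).drop m := by
  induction g generalizing m with
  | zero => simp [List.finRange]
  | succ g ih =>
    rcases m with _ | m
    · simp
    · rw [List.finRange_succ]
      have hc : ((fun j : Fin (g+1) => decide (m + 1 ≤ (j : ℕ))) ∘ Fin.succ) =
          (fun j : Fin g => decide (m ≤ (j : ℕ))) := by
        funext j; simp [Fin.val_succ]
      simp only [List.filter_cons, List.filter_map, hc, ih, List.drop_succ_cons,
        List.map_drop]
      simp

lemma bbN_eq_drop (g n m : ℕ) :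
    bbN g n m = (((List.finRange g).drop m).map (aa g n)).prod := by
  rw [bbN, filter_finRange]

lemma bbN_of_ge (g n m : ℕ) (h : g ≤ m) : bbN g n m = 1 := by
  rw [bbN_eq_drop, List.drop_eq_nil_of_le (by simpa using h)]; simp

lemma bbN_succ (g n m : ℕ) (h : m < g) :
    bbN g n m = aa g n ⟨m, h⟩ * bbN g n (m + 1) := by
  rw [bbN_eq_drop, bbN_eq_drop, List.drop_eq_getElem_cons (by simpa using h)]
  simp [List.getElem_finRange, Fin.cast]

end Scratch

namespace S2
variable {g n : ℕ}

lemma bbN_comm (h : 0 < n - 1) (r : Fin g) (m : ℕ) (hm : (r : ℕ) < m) :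
    bbN g n m * (ss g n ⟨0, h⟩ * aa g n r * (ss g n ⟨0, h⟩)⁻¹) =
      (ss g n ⟨0, h⟩ * aa g n r * (ss g n ⟨0, h⟩)⁻¹) * bbN g n m := by
  by_cases hg : g ≤ m
  · simp [Scratch.bbN_of_ge g n m hg]
  · push_neg at hg
    have : bbN g n m = aa g n ⟨m, hg⟩ * bbN g n (m + 1) := Scratch.bbN_succ g n m hg
    rw [this]
    have h5 := Scratch.rel5 g n h (i := ⟨m, hg⟩) (r := r) hm
    have ih := bbN_comm h r (m + 1) (by omega)
    calc aa g n ⟨m, hg⟩ * bbN g n (m+1) * (ss g n ⟨0, h⟩ * aa g n r * (ss g n ⟨0, h⟩)⁻¹)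
        = aa g n ⟨m, hg⟩ * (bbN g n (m+1) * (ss g n ⟨0, h⟩ * aa g n r * (ss g n ⟨0, h⟩)⁻¹)) := by
          group
      _ = aa g n ⟨m, hg⟩ * ((ss g n ⟨0, h⟩ * aa g n r * (ss g n ⟨0, h⟩)⁻¹) * bbN g n (m+1)) := by
          rw [ih]
      _ = (aa g n ⟨m, hg⟩ * (ss g n ⟨0, h⟩ * aa g n r * (ss g n ⟨0, h⟩)⁻¹)) * bbN g n (m+1) := by
          group
      _ = ((ss g n ⟨0, h⟩ * aa g n r * (ss g n ⟨0, h⟩)⁻¹) * aa g n ⟨m, hg⟩) * bbN g n (m+1) := by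
          rw [h5]
      _ = (ss g n ⟨0, h⟩ * aa g n r * (ss g n ⟨0, h⟩)⁻¹) * (aa g n ⟨m, hg⟩ * bbN g n (m+1)) := by
          group
termination_by g - m
decreasing_by omega

lemma Qlem (h : 0 < n - 1) (m : ℕ) :
    bbN g n m * ss g n ⟨0, h⟩ * bbN g n m * ss g n ⟨0, h⟩ =
      ss g n ⟨0, h⟩ * bbN g n m * ss g n ⟨0, h⟩ * bbN g n m := by
  by_cases hg : g ≤ m
  · simp [Scratch.bbN_of_ge g n m hg]
  · push_neg at hg
    set s := ss g n ⟨0, h⟩ with hs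
    set a := aa g n ⟨m, hg⟩ with ha
    set b := bbN g n (m + 1) with hb
    have hsplit : bbN g n m = a * b := Scratch.bbN_succ g n m hg
    have ih : b * s * b * s = s * b * s * b := Qlem h (m + 1)
    have h1 : b * (s * a * s⁻¹) = (s * a * s⁻¹) * b := bbN_comm h ⟨m, hg⟩ (m + 1) (Nat.lt_succ_self m)
    have h4 : a * s * a * s = s * a * s * a := Scratch.rel4 g n h ⟨m, hg⟩
    have key : ∀ x : HB g n, b * s * a * x = (s * a * s⁻¹) * b * s * x := by
      intro x
      have : b * s * a = (s * a * s⁻¹) * b * s := by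
        calc b * s * a = b * (s * a * s⁻¹) * s := by group
          _ = (s * a * s⁻¹) * b * s := by rw [h1]
      rw [this]
    rw [hsplit]
    calc a * b * s * (a * b) * s = (a * (b * s * a)) * (b * s) := by group
      _ = (a * ((s * a * s⁻¹) * b * s)) * (b * s) := by rw [show b * s * a = (s*a*s⁻¹)*b*s from by
            calc b * s * a = b * (s * a * s⁻¹) * s := by group
              _ = (s * a * s⁻¹) * b * s := by rw [h1]]
      _ = a * (s * a * s⁻¹) * (b * s * b * s) := by group
      _ = a * (s * a * s⁻¹) * (s * b * s * b) := by rw [ih]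
      _ = (a * s * a) * (b * s * b) := by group
      _ = s * a * (s * a * s⁻¹) * b * (s * b) := by
            have : s * a * s * a * s⁻¹ = a * s * a := by
              rw [show s * a * s * a = a * s * a * s from h4.symm]; group
            rw [← this]; group
      _ = s * a * (b * (s * a * s⁻¹)) * (s * b) := by rw [h1]; try group
      _ = s * (a * b) * s * (a * b) := by group
termination_by g - m
decreasing_by omega

lemma main_aux (h : 0 < n - 1) (d m k : ℕ) (hd : m = k + d) :
    bbN g n m * ss g n ⟨0, h⟩ * bbN g n k * ss g n ⟨0, h⟩ =
      ss g n ⟨0, h⟩ * bbN g n k * ss g n ⟨0, h⟩ * bbN g n m := by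
  induction d generalizing k with
  | zero => subst hd; exact Qlem h m
  | succ d ihd =>
    by_cases hg : g ≤ k
    · have hm : bbN g n m = 1 := Scratch.bbN_of_ge g n m (by omega)
      have hk : bbN g n k = 1 := Scratch.bbN_of_ge g n k hg
      rw [hm, hk]; group
    · push_neg at hg
      set s := ss g n ⟨0, h⟩ with hs
      set a := aa g n ⟨k, hg⟩ with ha
      have hsplit : bbN g n k = a * bbN g n (k + 1) := Scratch.bbN_succ g n k hg
      have ih := ihd (k + 1) (by omega)
      have hc : bbN g n m * (s * a * s⁻¹) = (s * a * s⁻¹) * bbN g n m :=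
        bbN_comm h ⟨k, hg⟩ m (show k < m by omega)
      rw [hsplit]
      calc bbN g n m * s * (a * bbN g n (k+1)) * s
          = (bbN g n m * (s * a * s⁻¹)) * (s * bbN g n (k+1) * s) := by group
        _ = ((s * a * s⁻¹) * bbN g n m) * (s * bbN g n (k+1) * s) := by rw [hc]
        _ = (s * a * s⁻¹) * (bbN g n m * s * bbN g n (k+1) * s) := by group
        _ = (s * a * s⁻¹) * (s * bbN g n (k+1) * s * bbN g n m) := by rw [ih]
        _ = s * (a * bbN g n (k+1)) * s * bbN g n m := by group

end S2

/-- in `B_{g,n}` (`n ≥ 2`), with `b_i := a_i ⋯ a_g`, the relation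
`b_i σ_1 b_r σ_1 = σ_1 b_r σ_1 b_i` holds for all `r ≤ i`. -/
theorem loop_sigma_relation (g n : ℕ) (hn : 2 ≤ n) (r i : Fin g) (hri : r ≤ i) :
    bbN g n (i : ℕ) * ss g n ⟨0, by omega⟩ * bbN g n (r : ℕ) * ss g n ⟨0, by omega⟩ =
      ss g n ⟨0, by omega⟩ * bbN g n (r : ℕ) * ss g n ⟨0, by omega⟩ * bbN g n (i : ℕ) := by
  have h : 0 < n - 1 := by omega
  exact S2.main_aux h ((i : ℕ) - (r : ℕ)) (i : ℕ) (r : ℕ) (by have := hri; omega)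
end

section
/- The two presentations of B_{g,n} are equivalent: there is a group isomorphism from the group presented on generators b_1,…,b_g, σ_1,…,σ_{n-1} with relations σ_k σ_j = σ_j σ_k for |k−j|>1, σ_k σ_{k+1} σ_k = σ_{k+1} σ_k σ_{k+1}, b_i σ_k = σ_k b_i for k ≥ 2, and b_i σ_1 b_r σ_1 = σ_1 b_r σ_1 b_i for r ≤ i, to the group presented on generators a_1,…,a_g, σ_1,…,σ_{n-1} with relations σ_k σ_j = σ_j σ_k for |k−j|>1, σ_k σ_{k+1} σ_k = σ_{k+1} σ_k σ_{k+1}, a_i σ_k = σ_k a_i for k ≥ 2, a_i σ_1 a_i σ_1 = σ_1 a_i σ_1 a_i, and a_i (σ_1 a_r σ_1^{-1}) = (σ_1 a_r σ_1^{-1}) a_i for r < i, sending b_i to a_i a_{i+1} ⋯ a_g and σ_k to σ_k. -/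
/-- The defining relators of the `b`-presentation of `B_{g,n}`: here `Sum.inl i`
stands for the loop generator `b_{i+1}` (0-based) and `Sum.inr k` for `σ_{k+1}`. -/
def hrelsB (g n : ℕ) : Set (FreeGroup (HGen g n)) :=
  { r | (∃ j k : Fin (n - 1), (j : ℕ) + 1 < (k : ℕ) ∧
          r = fs g n k * fs g n j * (fs g n j * fs g n k)⁻¹) ∨
        (∃ (k : Fin (n - 1)) (h : (k : ℕ) + 1 < n - 1),
          r = fs g n k * fs g n ⟨(k : ℕ) + 1, h⟩ * fs g n k *
              (fs g n ⟨(k : ℕ) + 1, h⟩ * fs g n k * fs g n ⟨(k : ℕ) + 1, h⟩)⁻¹) ∨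
        (∃ (i : Fin g) (k : Fin (n - 1)), 1 ≤ (k : ℕ) ∧
          r = fa g n i * fs g n k * (fs g n k * fa g n i)⁻¹) ∨
        (∃ (i r' : Fin g) (h : 0 < n - 1), (r' : ℕ) ≤ (i : ℕ) ∧
          r = fa g n i * fs g n ⟨0, h⟩ * fa g n r' * fs g n ⟨0, h⟩ *
              (fs g n ⟨0, h⟩ * fa g n r' * fs g n ⟨0, h⟩ * fa g n i)⁻¹) }

/-! ### Auxiliary machinery for the equivalence of presentations -/

section Aux

lemma filt_cons (g i : ℕ) (h : i < g) :
    (List.finRange g).filter (fun j : Fin g => decide (i ≤ (j : ℕ))) =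
      ⟨i, h⟩ :: (List.finRange g).filter (fun j : Fin g => decide (i + 1 ≤ (j : ℕ))) := by
  induction g with
  | zero => omega
  | succ g ih =>
    rw [List.finRange_succ_last]
    simp only [List.filter_append, List.filter_map, Function.comp_def]
    by_cases hig : i < g
    · have e1 : (fun j : Fin g => decide (i ≤ ((Fin.castSucc j : Fin (g+1)) : ℕ)))
          = (fun j : Fin g => decide (i ≤ (j : ℕ))) := by
        funext j; simp [Fin.coe_castSucc]
      have e2 : (fun j : Fin g => decide (i + 1 ≤ ((Fin.castSucc j : Fin (g+1)) : ℕ)))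
          = (fun j : Fin g => decide (i + 1 ≤ (j : ℕ))) := by
        funext j; simp [Fin.coe_castSucc]
      rw [e1, e2, ih hig]
      simp [Fin.last, Fin.castSucc, Fin.castAdd, Fin.castLE, Nat.le_of_lt hig, hig.le,
        Nat.succ_le_of_lt hig, List.filter_cons, List.filter_nil, hig]
    · have hig' : i = g := by omega
      have e1 : List.filter (fun j : Fin g => decide (i ≤ ((Fin.castSucc j : Fin (g+1)) : ℕ)))
          (List.finRange g) = [] := by
        apply List.filter_eq_nil_iff.2; intro j _
        simp only [Fin.coe_castSucc, decide_eq_true_eq]; omega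
      have e2 : List.filter (fun j : Fin g => decide (i + 1 ≤ ((Fin.castSucc j : Fin (g+1)) : ℕ)))
          (List.finRange g) = [] := by
        apply List.filter_eq_nil_iff.2; intro j _
        simp only [Fin.coe_castSucc, decide_eq_true_eq]; omega
      rw [e1, e2]
      subst hig'
      simp [Fin.last]

lemma filt_nil (g i : ℕ) (h : g ≤ i) :
    (List.finRange g).filter (fun j : Fin g => decide (i ≤ (j : ℕ))) = [] := by
  apply List.filter_eq_nil_iff.2
  intro j _
  simp only [decide_eq_true_eq]
  omega

lemma bbN_of_ge (g n : ℕ) {i : ℕ} (h : g ≤ i) : bbN g n i = 1 := by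
  rw [bbN, filt_nil g i h]; simp

lemma bbN_succ (g n : ℕ) {i : ℕ} (h : i < g) :
    bbN g n i = aa g n ⟨i, h⟩ * bbN g n (i + 1) := by
  rw [bbN, bbN, filt_cons g i h]; simp

/-! #### Relations in the `a`-presentation -/

lemma rel3 (g n : ℕ) (i : Fin g) (k : Fin (n - 1)) (hk : 1 ≤ (k : ℕ)) :
    Commute (aa g n i) (ss g n k) := by
  have h0 := hrel_one g n (r := fa g n i * fs g n k * (fs g n k * fa g n i)⁻¹)
    (Or.inr (Or.inr (Or.inl ⟨i, k, hk, rfl⟩)))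
  simp only [map_mul, map_inv] at h0
  rw [mul_inv_eq_one] at h0
  exact h0

lemma rel4 (g n : ℕ) (h : 0 < n - 1) (i : Fin g) :
    Commute (aa g n i) (ss g n ⟨0, h⟩ * aa g n i * ss g n ⟨0, h⟩) := by
  have h0 := hrel_one g n (r := fa g n i * fs g n ⟨0, h⟩ * fa g n i * fs g n ⟨0, h⟩ *
      (fs g n ⟨0, h⟩ * fa g n i * fs g n ⟨0, h⟩ * fa g n i)⁻¹)
    (Or.inr (Or.inr (Or.inr (Or.inl ⟨i, h, rfl⟩))))
  simp only [map_mul, map_inv] at h0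
  rw [mul_inv_eq_one] at h0
  show aa g n i * (ss g n ⟨0, h⟩ * aa g n i * ss g n ⟨0, h⟩)
      = ss g n ⟨0, h⟩ * aa g n i * ss g n ⟨0, h⟩ * aa g n i
  simp only [← mul_assoc]
  exact h0

lemma rel5 (g n : ℕ) (h : 0 < n - 1) (i r : Fin g) (hr : (r : ℕ) < (i : ℕ)) :
    Commute (aa g n i) (ss g n ⟨0, h⟩ * aa g n r * (ss g n ⟨0, h⟩)⁻¹) := by
  have h0 := hrel_one g n (r := fa g n i * (fs g n ⟨0, h⟩ * fa g n r * (fs g n ⟨0, h⟩)⁻¹) *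
      ((fs g n ⟨0, h⟩ * fa g n r * (fs g n ⟨0, h⟩)⁻¹) * fa g n i)⁻¹)
    (Or.inr (Or.inr (Or.inr (Or.inr ⟨i, r, h, hr, rfl⟩))))
  simp only [map_mul, map_inv] at h0
  rw [mul_inv_eq_one] at h0
  exact h0

lemma rel5' (g n : ℕ) (h : 0 < n - 1) (i r : Fin g) (hr : (r : ℕ) < (i : ℕ)) :
    Commute (aa g n r) ((ss g n ⟨0, h⟩)⁻¹ * aa g n i * ss g n ⟨0, h⟩) := by
  set σ := ss g n ⟨0, h⟩
  have h1 : Commute (σ * aa g n r * σ⁻¹) (aa g n i) := (rel5 g n h i r hr).symm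
  have h2 := h1.map (MulAut.conj σ⁻¹).toMonoidHom
  have e1 : (MulAut.conj σ⁻¹).toMonoidHom (σ * aa g n r * σ⁻¹) = aa g n r := by
    simp [MulAut.conj_apply]; group
  have e2 : (MulAut.conj σ⁻¹).toMonoidHom (aa g n i) = σ⁻¹ * aa g n i * σ := by
    simp [MulAut.conj_apply]
  rw [e1, e2] at h2
  exact h2

/-! #### Commutation with products -/

lemma commute_bbN (g n : ℕ) (x : HB g n) (i : ℕ)
    (hx : ∀ j : Fin g, i ≤ (j : ℕ) → Commute x (aa g n j)) :
    Commute x (bbN g n i) := by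
  apply Commute.list_prod_right
  intro y hy
  simp only [List.mem_map] at hy
  obtain ⟨j, hj, rfl⟩ := hy
  exact hx j (by simpa using (List.mem_filter.1 hj).2)

lemma conj_prod (g n : ℕ) (u : HB g n) (l : List (Fin g)) :
    u * (l.map (aa g n)).prod * u⁻¹ = (l.map (fun j => u * aa g n j * u⁻¹)).prod := by
  induction l with
  | nil => simp
  | cons a l ih =>
    simp only [List.map_cons, List.prod_cons]
    rw [← ih]
    group

lemma commute_conj_bbN (g n : ℕ) (x u : HB g n) (i : ℕ)
    (hx : ∀ j : Fin g, i ≤ (j : ℕ) → Commute x (u * aa g n j * u⁻¹)) :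
    Commute x (u * bbN g n i * u⁻¹) := by
  rw [bbN, conj_prod]
  apply Commute.list_prod_right
  intro y hy
  simp only [List.mem_map] at hy
  obtain ⟨j, hj, rfl⟩ := hy
  exact hx j (by simpa using (List.mem_filter.1 hj).2)

/-! #### The key derived relations in the `a`-presentation -/

lemma lemD (g n : ℕ) (h : 0 < n - 1) (i : ℕ) (hi : i < g) :
    Commute (aa g n ⟨i, hi⟩) (ss g n ⟨0, h⟩ * bbN g n i * ss g n ⟨0, h⟩) := by
  set σ := ss g n ⟨0, h⟩ with hσ
  have e : σ * bbN g n i * σ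
      = (σ * aa g n ⟨i, hi⟩ * σ) * (σ⁻¹ * bbN g n (i + 1) * σ⁻¹⁻¹) := by
    rw [bbN_succ g n hi]; group
  rw [e]
  refine (rel4 g n h ⟨i, hi⟩).mul_right ?_
  refine commute_conj_bbN g n _ _ _ ?_
  intro j hj
  have := rel5' g n h j ⟨i, hi⟩ (by simpa using by omega : (⟨i, hi⟩ : Fin g).val < (j : ℕ))
  simpa [inv_inv] using this

lemma lemC (g n : ℕ) (h : 0 < n - 1) (i : ℕ) :
    Commute (bbN g n i) (ss g n ⟨0, h⟩ * bbN g n i * ss g n ⟨0, h⟩) := by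
  by_cases hi : g ≤ i
  · rw [bbN_of_ge g n hi]; exact Commute.one_left _
  · have hig : i < g := by omega
    set σ := ss g n ⟨0, h⟩ with hσ
    have e : σ * bbN g n i * σ
        = (σ * aa g n ⟨i, hig⟩ * σ⁻¹) * (σ * bbN g n (i + 1) * σ) := by
      rw [bbN_succ g n hig]; group
    rw [e, bbN_succ g n hig]
    refine Commute.mul_left ?_ (Commute.mul_right ?_ ?_)
    · have e2 : (σ * aa g n ⟨i, hig⟩ * σ⁻¹) * (σ * bbN g n (i + 1) * σ)
          = σ * bbN g n i * σ := by rw [bbN_succ g n hig]; group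
      rw [e2]
      exact lemD g n h i hig
    · refine (commute_bbN g n (σ * aa g n ⟨i, hig⟩ * σ⁻¹) (i + 1) ?_).symm
      intro j hj
      exact (rel5 g n h j ⟨i, hig⟩ (by simp; omega)).symm
    · exact lemC g n h (i + 1)
termination_by g - i
decreasing_by omega

lemma lemCgen (g n : ℕ) (h : 0 < n - 1) (r i : ℕ) (hri : r ≤ i) :
    Commute (bbN g n i) (ss g n ⟨0, h⟩ * bbN g n r * ss g n ⟨0, h⟩) := by
  rcases eq_or_lt_of_le hri with heq | hlt
  · subst heq; exact lemC g n h r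
  · by_cases hrg : g ≤ r
    · rw [bbN_of_ge g n (by omega : g ≤ i)]
      exact Commute.one_left _
    · have hrg' : r < g := by omega
      set σ := ss g n ⟨0, h⟩ with hσ
      have e : σ * bbN g n r * σ
          = (σ * aa g n ⟨r, hrg'⟩ * σ⁻¹) * (σ * bbN g n (r + 1) * σ) := by
        rw [bbN_succ g n hrg']; group
      rw [e]
      refine Commute.mul_right ?_ (lemCgen g n h (r + 1) i (by omega))
      refine (commute_bbN g n (σ * aa g n ⟨r, hrg'⟩ * σ⁻¹) i ?_).symm
      intro j hj
      exact (rel5 g n h j ⟨r, hrg'⟩ (by simp; omega)).symm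
termination_by i - r
decreasing_by omega

end Aux

section PartB

/-- Generator `b_{i+1}` of the `b`-presentation. -/
def bo (g n : ℕ) (i : Fin g) : PresentedGroup (hrelsB g n) := PresentedGroup.of (Sum.inl i)

/-- Generator `σ_{k+1}` of the `b`-presentation. -/
def so (g n : ℕ) (k : Fin (n - 1)) : PresentedGroup (hrelsB g n) := PresentedGroup.of (Sum.inr k)

/-- `b_{j+1}` with out-of-range indices sent to `1`. -/
def bext (g n : ℕ) (j : ℕ) : PresentedGroup (hrelsB g n) :=
  if h : j < g then bo g n ⟨j, h⟩ else 1

lemma hrelB_one (g n : ℕ) {r : FreeGroup (HGen g n)} (hr : r ∈ hrelsB g n) :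
    PresentedGroup.mk (hrelsB g n) r = 1 := by
  have : r ∈ Subgroup.normalClosure (hrelsB g n) := Subgroup.subset_normalClosure hr
  exact (QuotientGroup.eq_one_iff r).2 this

lemma relB3 (g n : ℕ) (i : Fin g) (k : Fin (n - 1)) (hk : 1 ≤ (k : ℕ)) :
    Commute (bo g n i) (so g n k) := by
  have h0 := hrelB_one g n (r := fa g n i * fs g n k * (fs g n k * fa g n i)⁻¹)
    (Or.inr (Or.inr (Or.inl ⟨i, k, hk, rfl⟩)))
  simp only [map_mul, map_inv] at h0
  rw [mul_inv_eq_one] at h0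
  exact h0

lemma relB4 (g n : ℕ) (h : 0 < n - 1) (i r : Fin g) (hr : (r : ℕ) ≤ (i : ℕ)) :
    Commute (bo g n i) (so g n ⟨0, h⟩ * bo g n r * so g n ⟨0, h⟩) := by
  have h0 := hrelB_one g n (r := fa g n i * fs g n ⟨0, h⟩ * fa g n r * fs g n ⟨0, h⟩ *
      (fs g n ⟨0, h⟩ * fa g n r * fs g n ⟨0, h⟩ * fa g n i)⁻¹)
    (Or.inr (Or.inr (Or.inr ⟨i, r, h, hr, rfl⟩)))
  simp only [map_mul, map_inv] at h0
  rw [mul_inv_eq_one] at h0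
  show bo g n i * (so g n ⟨0, h⟩ * bo g n r * so g n ⟨0, h⟩)
      = so g n ⟨0, h⟩ * bo g n r * so g n ⟨0, h⟩ * bo g n i
  simp only [← mul_assoc]
  exact h0

lemma relB4be (g n : ℕ) (h : 0 < n - 1) (i : Fin g) {j : ℕ} (hj : j ≤ (i : ℕ)) :
    Commute (bo g n i) (so g n ⟨0, h⟩ * bext g n j * so g n ⟨0, h⟩) := by
  have hjg : j < g := lt_of_le_of_lt hj i.isLt
  rw [bext, dif_pos hjg]
  exact relB4 g n h i ⟨j, hjg⟩ hj

lemma relB4eb (g n : ℕ) (h : 0 < n - 1) (r : Fin g) {i : ℕ} (hri : (r : ℕ) ≤ i) :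
    Commute (bext g n i) (so g n ⟨0, h⟩ * bo g n r * so g n ⟨0, h⟩) := by
  by_cases hig : i < g
  · rw [bext, dif_pos hig]
    exact relB4 g n h ⟨i, hig⟩ r hri
  · rw [bext, dif_neg hig]
    exact Commute.one_left _

lemma relB4ee (g n : ℕ) (h : 0 < n - 1) {i j : ℕ} (hj : j ≤ i) :
    Commute (bext g n i) (so g n ⟨0, h⟩ * bext g n j * so g n ⟨0, h⟩) := by
  by_cases hig : i < g
  · rw [bext, dif_pos hig]
    exact relB4be g n h ⟨i, hig⟩ hj
  · rw [bext]; rw [dif_neg hig]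
    exact Commute.one_left _

/-! #### Abstract commutation lemmas -/

lemma key4 {G : Type*} [Group G] (b c σ : G) (h1 : Commute b (σ * b * σ))
    (h2 : Commute c (σ * b * σ)) (h3 : Commute c (σ * c * σ)) :
    Commute (b * c⁻¹) (σ * (b * c⁻¹) * σ) := by
  have K1 : Commute (σ * (b * c⁻¹) * σ⁻¹) c := by
    have e : σ * (b * c⁻¹) * σ⁻¹ = (σ * b * σ) * (σ * c * σ)⁻¹ := by group
    rw [e]
    exact Commute.mul_left h2.symm h3.symm.inv_left
  have K : Commute (b * c⁻¹) (σ⁻¹ * c * σ) := by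
    have h' := K1.map (MulAut.conj σ⁻¹).toMonoidHom
    have e3 : (MulAut.conj σ⁻¹).toMonoidHom (σ * (b * c⁻¹) * σ⁻¹) = b * c⁻¹ := by
      simp only [MulEquiv.coe_toMonoidHom, MulAut.conj_apply]; group
    have e4 : (MulAut.conj σ⁻¹).toMonoidHom c = σ⁻¹ * c * σ := by
      simp only [MulEquiv.coe_toMonoidHom, MulAut.conj_apply]; group
    rwa [e3, e4] at h'
  have e2 : σ * (b * c⁻¹) * σ = (σ * b * σ) * (σ⁻¹ * c * σ)⁻¹ := by group
  rw [e2]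
  exact Commute.mul_right (Commute.mul_left h1 h2.inv_left) K.inv_right

lemma key5 {G : Type*} [Group G] (b c b' c' σ : G)
    (hbb : Commute b (σ * b' * σ)) (hbc : Commute b (σ * c' * σ))
    (hcb : Commute c (σ * b' * σ)) (hcc : Commute c (σ * c' * σ)) :
    Commute (b * c⁻¹) (σ * (b' * c'⁻¹) * σ⁻¹) := by
  have e : σ * (b' * c'⁻¹) * σ⁻¹ = (σ * b' * σ) * (σ * c' * σ)⁻¹ := by group
  rw [e]
  exact Commute.mul_right (Commute.mul_left hbb hcb.inv_left)
    (Commute.mul_left hbc hcc.inv_left).inv_right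

end PartB

section PartC

/-- The map of generators defining `φ : ⟨b⟩-presentation → ⟨a⟩-presentation`. -/
def fphi (g n : ℕ) : HGen g n → HB g n :=
  Sum.elim (fun i => bbN g n (i : ℕ)) (ss g n)

/-- The map of generators defining `ψ : ⟨a⟩-presentation → ⟨b⟩-presentation`. -/
def fpsi (g n : ℕ) : HGen g n → PresentedGroup (hrelsB g n) :=
  Sum.elim (fun i => bo g n i * (bext g n ((i : ℕ) + 1))⁻¹) (so g n)

lemma relB3e (g n : ℕ) (j : ℕ) (k : Fin (n - 1)) (hk : 1 ≤ (k : ℕ)) :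
    Commute (bext g n j) (so g n k) := by
  by_cases hjg : j < g
  · rw [bext, dif_pos hjg]; exact relB3 g n ⟨j, hjg⟩ k hk
  · rw [bext, dif_neg hjg]; exact Commute.one_left _

lemma phi_aux (g n : ℕ) : ∀ r ∈ hrelsB g n, FreeGroup.lift (fphi g n) r = 1 := by
  intro r hr
  rcases hr with ⟨j, k, hjk, rfl⟩ | ⟨k, h, rfl⟩ | ⟨i, k, hk, rfl⟩ | ⟨i, r', h, hri, rfl⟩
  · have h0 := hrel_one g n (r := fs g n k * fs g n j * (fs g n j * fs g n k)⁻¹)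
      (Or.inl ⟨j, k, hjk, rfl⟩)
    simp only [map_mul, map_inv] at h0 ⊢
    simp only [fs, FreeGroup.lift_apply_of, fphi, Sum.elim_inr]
    exact h0
  · have h0 := hrel_one g n (r := fs g n k * fs g n ⟨(k : ℕ) + 1, h⟩ * fs g n k *
        (fs g n ⟨(k : ℕ) + 1, h⟩ * fs g n k * fs g n ⟨(k : ℕ) + 1, h⟩)⁻¹)
      (Or.inr (Or.inl ⟨k, h, rfl⟩))
    simp only [map_mul, map_inv] at h0 ⊢
    simp only [fs, FreeGroup.lift_apply_of, fphi, Sum.elim_inr]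
    exact h0
  · simp only [map_mul, map_inv, fa, fs, FreeGroup.lift_apply_of, fphi, Sum.elim_inl, Sum.elim_inr]
    rw [mul_inv_eq_one]
    exact (commute_bbN g n (ss g n k) (i : ℕ) (fun j _ => (rel3 g n j k hk).symm)).symm
  · simp only [map_mul, map_inv, fa, fs, FreeGroup.lift_apply_of, fphi, Sum.elim_inl, Sum.elim_inr]
    rw [mul_inv_eq_one]
    have hc := (lemCgen g n h (r' : ℕ) (i : ℕ) hri).eq
    simp only [mul_assoc] at hc ⊢
    exact hc

lemma psi_aux (g n : ℕ) : ∀ r ∈ hrels g n, FreeGroup.lift (fpsi g n) r = 1 := by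
  intro r hr
  rcases hr with ⟨j, k, hjk, rfl⟩ | ⟨k, h, rfl⟩ | ⟨i, k, hk, rfl⟩ | ⟨i, h, rfl⟩ |
    ⟨i, r', h, hri, rfl⟩
  · have h0 := hrelB_one g n (r := fs g n k * fs g n j * (fs g n j * fs g n k)⁻¹)
      (Or.inl ⟨j, k, hjk, rfl⟩)
    simp only [map_mul, map_inv] at h0 ⊢
    simp only [fs, FreeGroup.lift_apply_of, fpsi, Sum.elim_inr]
    exact h0
  · have h0 := hrelB_one g n (r := fs g n k * fs g n ⟨(k : ℕ) + 1, h⟩ * fs g n k *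
        (fs g n ⟨(k : ℕ) + 1, h⟩ * fs g n k * fs g n ⟨(k : ℕ) + 1, h⟩)⁻¹)
      (Or.inr (Or.inl ⟨k, h, rfl⟩))
    simp only [map_mul, map_inv] at h0 ⊢
    simp only [fs, FreeGroup.lift_apply_of, fpsi, Sum.elim_inr]
    exact h0
  · simp only [map_mul, map_inv, fa, fs, FreeGroup.lift_apply_of, fpsi, Sum.elim_inl, Sum.elim_inr]
    rw [mul_inv_eq_one]
    exact Commute.mul_left (relB3 g n i k hk) (relB3e g n ((i : ℕ) + 1) k hk).inv_left
  · simp only [map_mul, map_inv, fa, fs, FreeGroup.lift_apply_of, fpsi, Sum.elim_inl, Sum.elim_inr]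
    rw [mul_inv_eq_one]
    have hc := (key4 (bo g n i) (bext g n ((i : ℕ) + 1)) (so g n ⟨0, h⟩)
      (relB4 g n h i i le_rfl)
      (relB4eb g n h i (by omega))
      (relB4ee g n h le_rfl)).eq
    simp only [mul_assoc] at hc ⊢
    exact hc
  · simp only [map_mul, map_inv, fa, fs, FreeGroup.lift_apply_of, fpsi, Sum.elim_inl, Sum.elim_inr]
    rw [mul_inv_eq_one]
    have hc := (key5 (bo g n i) (bext g n ((i : ℕ) + 1)) (bo g n r')
      (bext g n ((r' : ℕ) + 1)) (so g n ⟨0, h⟩)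
      (relB4 g n h i r' (by omega))
      (relB4be g n h i (by omega))
      (relB4eb g n h r' (by omega))
      (relB4ee g n h (by omega))).eq
    simp only [mul_assoc] at hc ⊢
    exact hc

/-- The homomorphism from the `b`-presentation to the `a`-presentation. -/
def phih (g n : ℕ) : PresentedGroup (hrelsB g n) →* HB g n :=
  PresentedGroup.toGroup (phi_aux g n)

/-- The homomorphism from the `a`-presentation to the `b`-presentation. -/
def psih (g n : ℕ) : HB g n →* PresentedGroup (hrelsB g n) :=
  PresentedGroup.toGroup (psi_aux g n)

lemma phih_bo (g n : ℕ) (i : Fin g) : phih g n (bo g n i) = bbN g n (i : ℕ) :=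
  PresentedGroup.toGroup.of _

lemma phih_so (g n : ℕ) (k : Fin (n - 1)) : phih g n (so g n k) = ss g n k :=
  PresentedGroup.toGroup.of _

lemma psih_aa (g n : ℕ) (i : Fin g) :
    psih g n (aa g n i) = bo g n i * (bext g n ((i : ℕ) + 1))⁻¹ :=
  PresentedGroup.toGroup.of _

lemma psih_ss (g n : ℕ) (k : Fin (n - 1)) : psih g n (ss g n k) = so g n k :=
  PresentedGroup.toGroup.of _

lemma phih_bext (g n : ℕ) (j : ℕ) : phih g n (bext g n j) = bbN g n j := by
  by_cases hjg : j < g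
  · rw [bext, dif_pos hjg, phih_bo]
  · rw [bext, dif_neg hjg, map_one, bbN_of_ge g n (by omega)]

lemma psih_bbN (g n : ℕ) (i : ℕ) : psih g n (bbN g n i) = bext g n i := by
  by_cases hi : g ≤ i
  · rw [bbN_of_ge g n hi, map_one, bext, dif_neg (by omega)]
  · have hig : i < g := by omega
    rw [bbN_succ g n hig, map_mul, psih_aa, psih_bbN g n (i + 1), inv_mul_cancel_right,
      bext, dif_pos hig]
termination_by g - i
decreasing_by omega

lemma comp_psi_phi (g n : ℕ) :
    (psih g n).comp (phih g n) = MonoidHom.id (PresentedGroup (hrelsB g n)) := by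
  apply PresentedGroup.ext
  intro x
  rcases x with i | k
  · show psih g n (phih g n (bo g n i)) = bo g n i
    rw [phih_bo, psih_bbN, bext, dif_pos i.isLt]
  · show psih g n (phih g n (so g n k)) = so g n k
    rw [phih_so, psih_ss]

lemma comp_phi_psi (g n : ℕ) :
    (phih g n).comp (psih g n) = MonoidHom.id (HB g n) := by
  apply PresentedGroup.ext
  intro x
  rcases x with i | k
  · show phih g n (psih g n (aa g n i)) = aa g n i
    rw [psih_aa, map_mul, map_inv, phih_bo, phih_bext, bbN_succ g n i.isLt,
      mul_inv_cancel_right]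
  · show phih g n (psih g n (ss g n k)) = ss g n k
    rw [psih_ss, phih_so]

end PartC

/-- the `b`-presentation and the `a`-presentation give isomorphic
groups, via `b_i ↦ a_i a_{i+1} ⋯ a_g` and `σ_k ↦ σ_k`. -/
theorem presentations_equivalent (g n : ℕ) :
    ∃ φ : PresentedGroup (hrelsB g n) ≃* HB g n,
      (∀ i : Fin g, φ (PresentedGroup.of (Sum.inl i)) = bbN g n (i : ℕ)) ∧
      (∀ k : Fin (n - 1), φ (PresentedGroup.of (Sum.inr k)) = ss g n k) := by
  refine ⟨MonoidHom.toMulEquiv (phih g n) (psih g n) (comp_psi_phi g n) (comp_phi_psi g n),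
    fun i => ?_, fun k => ?_⟩
  · show phih g n (bo g n i) = bbN g n (i : ℕ)
    exact phih_bo g n i
  · show phih g n (so g n k) = ss g n k
    exact phih_so g n k
end

section
/- Define Markov equivalence ~ as the smallest equivalence relation on the disjoint union ⋃_{n≥1} B_{g,n} such that (i) β₁β₂ ~ β₁ σ_n^{±1} β₂ for all β₁, β₂ ∈ B_{g,n} (where σ_n ∈ B_{g,n+1} and β₁, β₂ are viewed in B_{g,n+1} via the natural inclusion), and (ii) σ_i^{-1} β σ_i ~ β for β ∈ B_{g,n} and 1 ≤ i ≤ n−1. Then for every α ∈ B_{g,n}, the braids α ω and ω α are Markov equivalent, where ω := a_1 a_2 ⋯ a_g is the maximal loop. -/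
/-! ### Auxiliary development -/

section Rels
variable (g m : ℕ)

lemma mk_fa (i : Fin g) : PresentedGroup.mk (hrels g m) (fa g m i) = aa g m i := rfl
lemma mk_fs (k : Fin (m - 1)) : PresentedGroup.mk (hrels g m) (fs g m k) = ss g m k := rfl

lemma relA {j k : Fin (m - 1)} (h : (j : ℕ) + 1 < (k : ℕ)) :
    ss g m k * ss g m j = ss g m j * ss g m k := by
  have h1 := hrel_one g m (Or.inl ⟨j, k, h, rfl⟩)
  simp only [map_mul, map_inv, mk_fs] at h1
  exact mul_inv_eq_one.mp h1

lemma relB {k : Fin (m - 1)} (h : (k : ℕ) + 1 < m - 1) :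
    ss g m k * ss g m ⟨(k : ℕ) + 1, h⟩ * ss g m k =
      ss g m ⟨(k : ℕ) + 1, h⟩ * ss g m k * ss g m ⟨(k : ℕ) + 1, h⟩ := by
  have h1 := hrel_one g m (Or.inr (Or.inl ⟨k, h, rfl⟩))
  simp only [map_mul, map_inv, mk_fs] at h1
  exact mul_inv_eq_one.mp h1

lemma relC (i : Fin g) {k : Fin (m - 1)} (h : 1 ≤ (k : ℕ)) :
    aa g m i * ss g m k = ss g m k * aa g m i := by
  have h1 := hrel_one g m (Or.inr (Or.inr (Or.inl ⟨i, k, h, rfl⟩)))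
  simp only [map_mul, map_inv, mk_fs, mk_fa] at h1
  exact mul_inv_eq_one.mp h1

lemma relD (i : Fin g) (h : 0 < m - 1) :
    aa g m i * ss g m ⟨0, h⟩ * aa g m i * ss g m ⟨0, h⟩ =
      ss g m ⟨0, h⟩ * aa g m i * ss g m ⟨0, h⟩ * aa g m i := by
  have h1 := hrel_one g m (Or.inr (Or.inr (Or.inr (Or.inl ⟨i, h, rfl⟩))))
  simp only [map_mul, map_inv, mk_fs, mk_fa] at h1
  exact mul_inv_eq_one.mp h1

lemma relE {i r : Fin g} (h : 0 < m - 1) (hr : (r : ℕ) < (i : ℕ)) :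
    aa g m i * (ss g m ⟨0, h⟩ * aa g m r * (ss g m ⟨0, h⟩)⁻¹) =
      (ss g m ⟨0, h⟩ * aa g m r * (ss g m ⟨0, h⟩)⁻¹) * aa g m i := by
  have h1 := hrel_one g m (Or.inr (Or.inr (Or.inr (Or.inr ⟨i, r, h, hr, rfl⟩))))
  simp only [map_mul, map_inv, mk_fs, mk_fa] at h1
  exact mul_inv_eq_one.mp h1

/-- derived: `a_i` commutes with `σ₁⁻¹ a_r σ₁` for `r > i`. -/
lemma relE' {i r : Fin g} (h : 0 < m - 1) (hr : (i : ℕ) < (r : ℕ)) :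
    aa g m i * ((ss g m ⟨0, h⟩)⁻¹ * aa g m r * ss g m ⟨0, h⟩) =
      ((ss g m ⟨0, h⟩)⁻¹ * aa g m r * ss g m ⟨0, h⟩) * aa g m i := by
  have h1 := relE g m h hr
  have h2 := congrArg (fun x => (ss g m ⟨0, h⟩)⁻¹ * x * ss g m ⟨0, h⟩) h1
  simp only [mul_assoc] at h2 ⊢
  simpa [mul_assoc] using h2.symm

end Rels
section Prods
variable (g m : ℕ)

/-- `σ_j` with 1-based index `j`, value `1` out of range. -/
def sN (j : ℕ) : HB g m := if h : 1 ≤ j ∧ j < m then ss g m ⟨j - 1, by omega⟩ else 1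

lemma sN_eq {j : ℕ} (h1 : 1 ≤ j) (h2 : j < m) :
    sN g m j = ss g m ⟨j - 1, by omega⟩ := dif_pos ⟨h1, h2⟩

lemma sN_out {j : ℕ} (h : ¬(1 ≤ j ∧ j < m)) : sN g m j = 1 := dif_neg h

/-- commutation of distant `σ`'s -/
lemma sN_comm {j k : ℕ} (hj : 1 ≤ j) (hjk : j + 2 ≤ k) :
    sN g m k * sN g m j = sN g m j * sN g m k := by
  by_cases hk : k < m
  · have hjm : j < m := by omega
    rw [sN_eq g m (by omega) hk, sN_eq g m hj hjm]
    exact relA g m (by simp; omega)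
  · rw [sN_out g m (by omega)]; group

/-- braid relation, 1-based -/
lemma sN_braid {j : ℕ} (hj : 1 ≤ j) (hjm : j + 1 < m) :
    sN g m j * sN g m (j + 1) * sN g m j = sN g m (j + 1) * sN g m j * sN g m (j + 1) := by
  rw [sN_eq g m hj (by omega), sN_eq g m (by omega) hjm]
  have hb : (j - 1 : ℕ) + 1 < m - 1 := by omega
  have e : (⟨j + 1 - 1, by omega⟩ : Fin (m - 1)) = ⟨(j - 1) + 1, hb⟩ := by
    apply Fin.ext; simp; omega
  rw [e]
  exact relB g m hb

lemma aa_sN_comm (i : Fin g) {k : ℕ} (hk : 2 ≤ k) :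
    aa g m i * sN g m k = sN g m k * aa g m i := by
  by_cases hkm : k < m
  · rw [sN_eq g m (by omega) hkm]
    exact relC g m i (by simp; omega)
  · rw [sN_out g m (by omega)]; group

/-- descending product `σ_j σ_{j-1} ⋯ σ_1` -/
def dP : ℕ → HB g m
  | 0 => 1
  | j + 1 => sN g m (j + 1) * dP j

/-- ascending product `σ_1 σ_2 ⋯ σ_j` -/
def uP : ℕ → HB g m
  | 0 => 1
  | j + 1 => uP j * sN g m (j + 1)

/-- `σ_{j+1} σ_j ⋯ σ_2` -/
def d2P : ℕ → HB g m
  | 0 => 1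
  | j + 1 => sN g m (j + 2) * d2P j

/-- `σ_2 σ_3 ⋯ σ_{j+1}` -/
def u2P : ℕ → HB g m
  | 0 => 1
  | j + 1 => u2P j * sN g m (j + 2)

lemma dP_split : ∀ j, dP g m (j + 1) = d2P g m j * sN g m 1
  | 0 => by simp [dP, d2P]
  | j + 1 => by
      rw [dP, dP_split j, d2P]
      group

lemma uP_split : ∀ j, uP g m (j + 1) = sN g m 1 * u2P g m j
  | 0 => by simp [uP, u2P]
  | j + 1 => by
      rw [uP, uP_split j, u2P]
      group

lemma sN_comm_dP {k : ℕ} (hk : 1 ≤ k) :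
    ∀ {j}, j + 2 ≤ k → sN g m k * dP g m j = dP g m j * sN g m k := by
  intro j
  induction j with
  | zero => intro h; simp [dP]
  | succ j ih =>
      intro h
      rw [dP, ← mul_assoc, sN_comm g m (by omega) h, mul_assoc, ih (by omega), mul_assoc]

lemma sN_comm_uP {k : ℕ} (hk : 1 ≤ k) :
    ∀ {j}, j + 2 ≤ k → sN g m k * uP g m j = uP g m j * sN g m k := by
  intro j
  induction j with
  | zero => intro h; simp [uP]
  | succ j ih =>
      intro h
      rw [uP, ← mul_assoc, ih (by omega), mul_assoc, sN_comm g m (by omega) h, ← mul_assoc]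

lemma aa_comm_d2P (i : Fin g) : ∀ j, aa g m i * d2P g m j = d2P g m j * aa g m i := by
  intro j
  induction j with
  | zero => simp [d2P]
  | succ j ih =>
      rw [d2P, ← mul_assoc, aa_sN_comm g m i (by omega), mul_assoc, ih, mul_assoc]

lemma aa_comm_u2P (i : Fin g) : ∀ j, aa g m i * u2P g m j = u2P g m j * aa g m i := by
  intro j
  induction j with
  | zero => simp [u2P]
  | succ j ih =>
      rw [u2P, ← mul_assoc, ih, mul_assoc, aa_sN_comm g m i (by omega), ← mul_assoc]

/-- key braid identity: `σ_k (σ_j ⋯ σ_1) = (σ_j ⋯ σ_1) σ_{k+1}` for `1 ≤ k < j < m`. -/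
lemma dP_slide : ∀ {j k : ℕ}, 1 ≤ k → k < j → j < m →
    sN g m k * dP g m j = dP g m j * sN g m (k + 1) := by
  intro j
  induction j with
  | zero => intro k _ h _; omega
  | succ j ih =>
      intro k hk hkj hjm
      rcases Nat.lt_or_ge k j with h | h
      · -- k < j
        rw [dP, ← mul_assoc, (sN_comm g m hk (by omega)).symm, mul_assoc,
          ih hk h (by omega), mul_assoc]
      · -- k = j
        have hkj' : k = j := by omega
        subst hkj'
        obtain ⟨t, rfl⟩ : ∃ t, k = t + 1 := ⟨k - 1, by omega⟩
        show sN g m (t+1) * dP g m (t+2) = dP g m (t+2) * sN g m (t+2)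
        rw [dP, dP, ← mul_assoc, ← mul_assoc]
        calc sN g m (t+1) * sN g m (t+2) * sN g m (t+1) * dP g m t
            = sN g m (t+2) * sN g m (t+1) * sN g m (t+2) * dP g m t := by
              rw [sN_braid g m (by omega) (by omega)]
          _ = sN g m (t+2) * sN g m (t+1) * (dP g m t * sN g m (t+2)) := by
              rw [mul_assoc, sN_comm_dP g m (by omega) (by omega)]
          _ = sN g m (t+2) * (sN g m (t+1) * dP g m t) * sN g m (t+2) := by group

lemma uP_slide : ∀ {j k : ℕ}, 1 ≤ k → k < j → j < m →
    uP g m j * sN g m k = sN g m (k + 1) * uP g m j := by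
  intro j
  induction j with
  | zero => intro k _ h _; omega
  | succ j ih =>
      intro k hk hkj hjm
      rcases Nat.lt_or_ge k j with h | h
      · rw [uP, mul_assoc, sN_comm g m hk (by omega), ← mul_assoc,
          ih hk h (by omega), mul_assoc]
      · have hkj' : k = j := by omega
        subst hkj'
        obtain ⟨t, rfl⟩ : ∃ t, k = t + 1 := ⟨k - 1, by omega⟩
        show uP g m (t+2) * sN g m (t+1) = sN g m (t+2) * uP g m (t+2)
        rw [uP, uP]
        calc uP g m t * sN g m (t+1) * sN g m (t+2) * sN g m (t+1)
            = uP g m t * (sN g m (t+1) * sN g m (t+2) * sN g m (t+1)) := by group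
          _ = uP g m t * (sN g m (t+2) * sN g m (t+1) * sN g m (t+2)) := by
              rw [sN_braid g m (by omega) (by omega)]
          _ = sN g m (t+2) * (uP g m t * sN g m (t+1) * sN g m (t+2)) := by
              rw [← mul_assoc, ← mul_assoc, ← mul_assoc,
                (sN_comm_uP g m (by omega) (by omega)).symm]
              group
          _ = sN g m (t+2) * (uP g m (t+1) * sN g m (t+2)) := by rw [uP]

end Prods
section LoopProds
variable (g m : ℕ)

/-- `a_{t+1}` with 0-based nat index, `1` out of range. -/
def aaN (t : ℕ) : HB g m := if h : t < g then aa g m ⟨t, h⟩ else 1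

/-- `a_{s+1} a_{s+2} ⋯ a_{s+k}` (0-based start `s`, length `k`). -/
def rP : ℕ → ℕ → HB g m
  | _, 0 => 1
  | s, k + 1 => aaN g m s * rP (s + 1) k

lemma rP_append : ∀ (k₁ : ℕ) (s k₂ : ℕ),
    rP g m s (k₁ + k₂) = rP g m s k₁ * rP g m (s + k₁) k₂ := by
  intro k₁
  induction k₁ with
  | zero => intro s k₂; simp [rP]
  | succ k₁ ih =>
      intro s k₂
      have : k₁ + 1 + k₂ = (k₁ + k₂) + 1 := by omega
      rw [this, rP, rP, ih (s+1) k₂, show s+1+k₁ = s+(k₁+1) from by omega, mul_assoc]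

lemma maxLoop_eq_rP : maxLoop g m = rP g m 0 g := by
  have h1 : (List.finRange g).map (aa g m) = (List.range' 0 g).map (aaN g m) := by
    apply List.ext_getElem
    · simp
    · intro i h1 h2
      simp only [List.getElem_map, List.getElem_finRange, List.getElem_range']
      have hi : i < g := by simpa using h1
      rw [aaN, dif_pos (by omega : 0 + 1 * i < g)]
      congr 1
      apply Fin.ext
      simp
  have h2 : ∀ k s, ((List.range' s k).map (aaN g m)).prod = rP g m s k := by
    intro k
    induction k with
    | zero => intro s; simp [rP]
    | succ k ih => intro s; rw [List.range'_succ, List.map_cons, List.prod_cons, ih, rP]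
  rw [maxLoop, h1, h2]

/-- `ω` commutes with `σ_k` for `k ≥ 2`. -/
lemma rP_comm_sN {k : ℕ} (hk : 2 ≤ k) : ∀ (t s : ℕ),
    rP g m s t * sN g m k = sN g m k * rP g m s t := by
  intro t
  induction t with
  | zero => intro s; simp [rP]
  | succ t ih =>
      intro s
      rw [rP, mul_assoc, ih, ← mul_assoc, ← mul_assoc]
      congr 1
      by_cases h : s < g
      · rw [aaN, dif_pos h]; exact aa_sN_comm g m _ hk
      · rw [aaN, dif_neg h]; group

lemma maxLoop_comm_sN {k : ℕ} (hk : 2 ≤ k) :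
    maxLoop g m * sN g m k = sN g m k * maxLoop g m := by
  rw [maxLoop_eq_rP]; exact rP_comm_sN g m hk g 0

section LemmaE

/-- `a_i` commutes with `σ₁⁻¹ (a_{s+1}⋯a_{s+t}) σ₁` when all indices exceed `i`. -/
lemma aa_comm_conj_up (hm : 2 ≤ m) (i : Fin g) : ∀ (t s : ℕ), (i : ℕ) < s →
    aa g m i * ((sN g m 1)⁻¹ * rP g m s t * sN g m 1) =
      ((sN g m 1)⁻¹ * rP g m s t * sN g m 1) * aa g m i := by
  intro t
  induction t with
  | zero => intro s _; simp [rP]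
  | succ t ih =>
      intro s hs
      have hd : rP g m s (t+1) = aaN g m s * rP g m (s+1) t := rfl
      have e : (sN g m 1)⁻¹ * rP g m s (t+1) * sN g m 1 =
          ((sN g m 1)⁻¹ * aaN g m s * sN g m 1) *
            ((sN g m 1)⁻¹ * rP g m (s+1) t * sN g m 1) := by rw [hd]; group
      rw [e]
      have h1 : aa g m i * ((sN g m 1)⁻¹ * aaN g m s * sN g m 1) =
          ((sN g m 1)⁻¹ * aaN g m s * sN g m 1) * aa g m i := by
        by_cases h : s < g
        · rw [aaN, dif_pos h, sN_eq g m (le_refl 1) (by omega)]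
          exact relE' g m (by omega) (by simpa using hs)
        · rw [aaN, dif_neg h]; group
      calc aa g m i * (((sN g m 1)⁻¹ * aaN g m s * sN g m 1) *
              ((sN g m 1)⁻¹ * rP g m (s+1) t * sN g m 1))
          = (aa g m i * ((sN g m 1)⁻¹ * aaN g m s * sN g m 1)) *
              ((sN g m 1)⁻¹ * rP g m (s+1) t * sN g m 1) := by group
        _ = ((sN g m 1)⁻¹ * aaN g m s * sN g m 1) *
              (aa g m i * ((sN g m 1)⁻¹ * rP g m (s+1) t * sN g m 1)) := by
              rw [h1]; group
        _ = ((sN g m 1)⁻¹ * aaN g m s * sN g m 1) *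
              (((sN g m 1)⁻¹ * rP g m (s+1) t * sN g m 1) * aa g m i) := by
              rw [ih (s+1) (by omega)]
        _ = (((sN g m 1)⁻¹ * aaN g m s * sN g m 1) *
              ((sN g m 1)⁻¹ * rP g m (s+1) t * sN g m 1)) * aa g m i := by group

/-- `a_i` commutes with `σ₁ (a_{s+1}⋯a_{s+t}) σ₁⁻¹` when all indices are below `i`. -/
lemma aa_comm_conj_down (hm : 2 ≤ m) (i : Fin g) : ∀ (t s : ℕ), s + t ≤ (i : ℕ) →
    aa g m i * (sN g m 1 * rP g m s t * (sN g m 1)⁻¹) =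
      (sN g m 1 * rP g m s t * (sN g m 1)⁻¹) * aa g m i := by
  intro t
  induction t with
  | zero => intro s _; simp [rP]
  | succ t ih =>
      intro s hs
      have hd : rP g m s (t+1) = aaN g m s * rP g m (s+1) t := rfl
      have e : sN g m 1 * rP g m s (t+1) * (sN g m 1)⁻¹ =
          (sN g m 1 * aaN g m s * (sN g m 1)⁻¹) *
            (sN g m 1 * rP g m (s+1) t * (sN g m 1)⁻¹) := by rw [hd]; group
      rw [e]
      have h1 : aa g m i * (sN g m 1 * aaN g m s * (sN g m 1)⁻¹) =
          (sN g m 1 * aaN g m s * (sN g m 1)⁻¹) * aa g m i := by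
        by_cases h : s < g
        · rw [aaN, dif_pos h, sN_eq g m (le_refl 1) (by omega)]
          exact relE g m (by omega) (by simp; omega)
        · rw [aaN, dif_neg h]; group
      calc aa g m i * ((sN g m 1 * aaN g m s * (sN g m 1)⁻¹) *
              (sN g m 1 * rP g m (s+1) t * (sN g m 1)⁻¹))
          = (aa g m i * (sN g m 1 * aaN g m s * (sN g m 1)⁻¹)) *
              (sN g m 1 * rP g m (s+1) t * (sN g m 1)⁻¹) := by group
        _ = (sN g m 1 * aaN g m s * (sN g m 1)⁻¹) *
              (aa g m i * (sN g m 1 * rP g m (s+1) t * (sN g m 1)⁻¹)) := by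
              rw [h1]; group
        _ = (sN g m 1 * aaN g m s * (sN g m 1)⁻¹) *
              ((sN g m 1 * rP g m (s+1) t * (sN g m 1)⁻¹) * aa g m i) := by
              rw [ih (s+1) (by omega)]
        _ = ((sN g m 1 * aaN g m s * (sN g m 1)⁻¹) *
              (sN g m 1 * rP g m (s+1) t * (sN g m 1)⁻¹)) * aa g m i := by group

/-- The central algebraic lemma: `a_i` commutes with `σ₁ ω σ₁`. -/
lemma aa_comm_s1ws1 (hm : 2 ≤ m) (i : Fin g) :
    aa g m i * (sN g m 1 * maxLoop g m * sN g m 1) =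
      (sN g m 1 * maxLoop g m * sN g m 1) * aa g m i := by
  have hig : (i : ℕ) < g := i.isLt
  have hsplit : maxLoop g m = rP g m 0 (i : ℕ) * (aa g m i * rP g m ((i:ℕ)+1) (g - (i:ℕ) - 1)) := by
    have h0 := rP_append g m (i:ℕ) 0 (g - (i:ℕ))
    rw [show (i:ℕ) + (g - (i:ℕ)) = g from by omega] at h0
    rw [maxLoop_eq_rP, h0, Nat.zero_add,
      show (g - (i:ℕ)) = (g - (i:ℕ) - 1) + 1 from by omega, rP, aaN, dif_pos hig, Fin.eta,
      Nat.add_sub_cancel]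
  set X := rP g m ((i:ℕ)+1) (g - (i:ℕ) - 1) with hX
  have hB : aa g m i * (sN g m 1 * (aa g m i * X) * sN g m 1) =
      (sN g m 1 * (aa g m i * X) * sN g m 1) * aa g m i := by
    have h4 : aa g m i * sN g m 1 * aa g m i * sN g m 1 =
        sN g m 1 * aa g m i * sN g m 1 * aa g m i := by
      rw [sN_eq g m (le_refl 1) (by omega)]
      exact relD g m i (by omega)
    have h1 := aa_comm_conj_up g m hm i (g - (i:ℕ) - 1) ((i:ℕ)+1) (by omega)
    rw [← hX] at h1
    calc aa g m i * (sN g m 1 * (aa g m i * X) * sN g m 1)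
        = (aa g m i * sN g m 1 * aa g m i * sN g m 1) *
            ((sN g m 1)⁻¹ * X * sN g m 1) := by group
      _ = (sN g m 1 * aa g m i * sN g m 1 * aa g m i) *
            ((sN g m 1)⁻¹ * X * sN g m 1) := by rw [h4]
      _ = (sN g m 1 * aa g m i * sN g m 1) *
            (aa g m i * ((sN g m 1)⁻¹ * X * sN g m 1)) := by group
      _ = (sN g m 1 * aa g m i * sN g m 1) *
            (((sN g m 1)⁻¹ * X * sN g m 1) * aa g m i) := by rw [h1]
      _ = (sN g m 1 * (aa g m i * X) * sN g m 1) * aa g m i := by group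
  have hC := aa_comm_conj_down g m hm i (i : ℕ) 0 (by omega)
  calc aa g m i * (sN g m 1 * maxLoop g m * sN g m 1)
      = aa g m i * ((sN g m 1 * rP g m 0 (i:ℕ) * (sN g m 1)⁻¹) *
          (sN g m 1 * (aa g m i * X) * sN g m 1)) := by rw [hsplit]; group
    _ = (aa g m i * (sN g m 1 * rP g m 0 (i:ℕ) * (sN g m 1)⁻¹)) *
          (sN g m 1 * (aa g m i * X) * sN g m 1) := by group
    _ = (sN g m 1 * rP g m 0 (i:ℕ) * (sN g m 1)⁻¹) *
          (aa g m i * (sN g m 1 * (aa g m i * X) * sN g m 1)) := by rw [hC]; group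
    _ = (sN g m 1 * rP g m 0 (i:ℕ) * (sN g m 1)⁻¹) *
          ((sN g m 1 * (aa g m i * X) * sN g m 1) * aa g m i) := by rw [hB]
    _ = (sN g m 1 * maxLoop g m * sN g m 1) * aa g m i := by rw [hsplit]; group

end LemmaE
end LoopProds
section TLemmas
variable (g m : ℕ)

lemma aa_comm_T (hm : 2 ≤ m) (i : Fin g) :
    aa g m i * (dP g m (m-1) * maxLoop g m * uP g m (m-1)) =
      (dP g m (m-1) * maxLoop g m * uP g m (m-1)) * aa g m i := by
  have e1 : dP g m (m-1) = d2P g m (m-2) * sN g m 1 := by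
    rw [show m - 1 = (m-2)+1 from by omega, dP_split]
  have e2 : uP g m (m-1) = sN g m 1 * u2P g m (m-2) := by
    rw [show m - 1 = (m-2)+1 from by omega, uP_split]
  calc aa g m i * (dP g m (m-1) * maxLoop g m * uP g m (m-1))
      = aa g m i * d2P g m (m-2) * (sN g m 1 * maxLoop g m * sN g m 1) * u2P g m (m-2) := by
        rw [e1, e2]; group
    _ = d2P g m (m-2) * aa g m i * (sN g m 1 * maxLoop g m * sN g m 1) * u2P g m (m-2) := by
        rw [aa_comm_d2P]
    _ = d2P g m (m-2) * ((sN g m 1 * maxLoop g m * sN g m 1) * aa g m i) * u2P g m (m-2) := by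
        rw [mul_assoc (d2P g m (m-2)), aa_comm_s1ws1 g m hm i]
    _ = d2P g m (m-2) * (sN g m 1 * maxLoop g m * sN g m 1) * (aa g m i * u2P g m (m-2)) := by
        group
    _ = d2P g m (m-2) * (sN g m 1 * maxLoop g m * sN g m 1) * (u2P g m (m-2) * aa g m i) := by
        rw [aa_comm_u2P]
    _ = (dP g m (m-1) * maxLoop g m * uP g m (m-1)) * aa g m i := by rw [e1, e2]; group

lemma sN_comm_T {j : ℕ} (hj : 1 ≤ j) (hjm : j + 1 < m) :
    sN g m j * (dP g m (m-1) * maxLoop g m * uP g m (m-1)) =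
      (dP g m (m-1) * maxLoop g m * uP g m (m-1)) * sN g m j := by
  calc sN g m j * (dP g m (m-1) * maxLoop g m * uP g m (m-1))
      = (sN g m j * dP g m (m-1)) * maxLoop g m * uP g m (m-1) := by group
    _ = (dP g m (m-1) * sN g m (j+1)) * maxLoop g m * uP g m (m-1) := by
        rw [dP_slide g m hj (by omega) (by omega)]
    _ = dP g m (m-1) * (sN g m (j+1) * maxLoop g m) * uP g m (m-1) := by group
    _ = dP g m (m-1) * (maxLoop g m * sN g m (j+1)) * uP g m (m-1) := by
        rw [← maxLoop_comm_sN g m (by omega)]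
    _ = dP g m (m-1) * maxLoop g m * (sN g m (j+1) * uP g m (m-1)) := by group
    _ = dP g m (m-1) * maxLoop g m * (uP g m (m-1) * sN g m j) := by
        rw [← uP_slide g m hj (by omega) (by omega)]
    _ = (dP g m (m-1) * maxLoop g m * uP g m (m-1)) * sN g m j := by group

end TLemmas

section IncTransfer
variable (g n : ℕ)

lemma inc_sN {j : ℕ} (hj : j < n) : inc g n (sN g n j) = sN g (n+1) j := by
  rcases Nat.eq_zero_or_pos j with rfl | hj1
  · rw [sN_out g n (by omega), sN_out g (n+1) (by omega), map_one]
  · rw [sN_eq g n hj1 hj, sN_eq g (n+1) hj1 (by omega), inc_ss]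

lemma inc_dP : ∀ {j}, j < n → inc g n (dP g n j) = dP g (n+1) j := by
  intro j
  induction j with
  | zero => intro _; simp only [dP, map_one]
  | succ j ih =>
      intro h
      rw [dP, map_mul, inc_sN g n h, ih (by omega), dP]

lemma inc_uP : ∀ {j}, j < n → inc g n (uP g n j) = uP g (n+1) j := by
  intro j
  induction j with
  | zero => intro _; simp only [uP, map_one]
  | succ j ih =>
      intro h
      rw [uP, map_mul, inc_sN g n h, ih (by omega), uP]

lemma inc_maxLoop : inc g n (maxLoop g n) = maxLoop g (n+1) := by
  rw [maxLoop, maxLoop, MonoidHom.map_list_prod, List.map_map]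
  have h : ⇑(inc g n) ∘ aa g n = aa g (n+1) := funext (inc_aa g n)
  rw [h]

end IncTransfer

section Markov
variable (g : ℕ)

lemma markov_conj_gen (n : ℕ) (i : Fin (n-1)) (x : HB g n) :
    MarkovEq g ⟨n, ss g n i * x * (ss g n i)⁻¹⟩ ⟨n, x⟩ := by
  have h := MStep.conj (g := g) (ss g n i * x * (ss g n i)⁻¹) i
  have e : (ss g n i)⁻¹ * (ss g n i * x * (ss g n i)⁻¹) * ss g n i = x := by group
  rw [e] at h
  exact Relation.EqvGen.symm _ _ (Relation.EqvGen.rel _ _ h)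

lemma markov_conj (n : ℕ) {γ : HB g n}
    (hγ : γ ∈ Subgroup.closure (Set.range (ss g n))) :
    ∀ x : HB g n, MarkovEq g ⟨n, γ * x * γ⁻¹⟩ ⟨n, x⟩ := by
  induction hγ using Subgroup.closure_induction with
  | mem y hy =>
      obtain ⟨i, rfl⟩ := hy
      exact fun x => markov_conj_gen g n i x
  | one =>
      intro x
      have h := Relation.EqvGen.refl (r := MStep g) ⟨n, x⟩
      simpa [MarkovEq] using h
  | mul y z hy hz ihy ihz =>
      intro x
      rw [show y * z * x * (y * z)⁻¹ = y * (z * x * z⁻¹) * y⁻¹ from by group]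
      exact Relation.EqvGen.trans _ _ _ (ihy (z * x * z⁻¹)) (ihz x)
  | inv y hy ihy =>
      intro x
      rw [inv_inv]
      have h := ihy (y⁻¹ * x * y)
      rw [show y * (y⁻¹ * x * y) * y⁻¹ = x from by group] at h
      exact Relation.EqvGen.symm _ _ h

lemma sN_mem (n : ℕ) (j : ℕ) : sN g n j ∈ Subgroup.closure (Set.range (ss g n)) := by
  unfold sN
  split
  · exact Subgroup.subset_closure ⟨_, rfl⟩
  · exact one_mem _

lemma dP_mem (n : ℕ) : ∀ j, dP g n j ∈ Subgroup.closure (Set.range (ss g n)) := by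
  intro j
  induction j with
  | zero => exact one_mem _
  | succ j ih => exact mul_mem (sN_mem g n (j+1)) ih

lemma uP_mem (n : ℕ) : ∀ j, uP g n j ∈ Subgroup.closure (Set.range (ss g n)) := by
  intro j
  induction j with
  | zero => exact one_mem _
  | succ j ih => exact mul_mem ih (sN_mem g n (j+1))

end Markov

lemma key_step (g n : ℕ) (hn : 1 ≤ n) (β : HB g n) :
    MarkovEq g ⟨n, β * (dP g n (n-1) * maxLoop g n * uP g n (n-1))⟩
      ⟨n, (dP g n (n-1) * maxLoop g n * uP g n (n-1)) * β⟩ := by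
  obtain ⟨t, rfl⟩ : ∃ t, n = t + 1 := ⟨n - 1, by omega⟩
  simp only [Nat.add_sub_cancel]
  set Ω : HB g (t+1) := dP g (t+1) t * maxLoop g (t+1) * uP g (t+1) t with hΩ
  set σ : HB g (t+2) := sN g (t+2) (t+1) with hσdef
  set T : HB g (t+2) := dP g (t+2) (t+1) * maxLoop g (t+2) * uP g (t+2) (t+1) with hT
  have hincΩ : inc g (t+1) Ω = dP g (t+2) t * maxLoop g (t+2) * uP g (t+2) t := by
    rw [hΩ, map_mul, map_mul, inc_dP g (t+1) (by omega), inc_uP g (t+1) (by omega),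
      inc_maxLoop]
  have hTσ : T = σ * inc g (t+1) Ω * σ := by
    rw [hincΩ, hT, hσdef, dP, uP]
    group
  have hcom : ∀ x : HB g (t+1), T * inc g (t+1) x = inc g (t+1) x * T := by
    intro x
    have hx := PresentedGroup.generated_by (hrels g (t+1))
      (Subgroup.comap (inc g (t+1)) (Subgroup.centralizer {T})) ?_ x
    · exact Subgroup.mem_centralizer_iff.mp hx T rfl
    · intro z
      have hmem : T * inc g (t+1) (PresentedGroup.of z) =
          inc g (t+1) (PresentedGroup.of z) * T := by
        cases z with
        | inl i =>
            have : inc g (t+1) (PresentedGroup.of (Sum.inl i)) = aa g (t+2) i :=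
              inc_aa g (t+1) i
            rw [this, hT]
            exact (aa_comm_T g (t+2) (by omega) i).symm
        | inr k =>
            have h1 : inc g (t+1) (PresentedGroup.of (Sum.inr k)) =
                sN g (t+2) ((k : ℕ) + 1) := by
              have h2 := inc_ss g (t+1) k
              rw [sN_eq g (t+2) (by omega) (by omega : (k:ℕ)+1 < t+2)]
              rw [show (PresentedGroup.of (Sum.inr k) : HB g (t+1)) = ss g (t+1) k from rfl,
                h2]
              congr 1
            rw [h1, hT]
            exact (sN_comm_T g (t+2) (by omega) (by omega : (k:ℕ)+1+1 < t+2)).symm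
      show inc g (t+1) (PresentedGroup.of z) ∈ Subgroup.centralizer {T}
      rw [Subgroup.mem_centralizer_iff]
      intro h hh
      rw [Set.mem_singleton_iff] at hh
      subst hh
      exact hmem
  have hs : ss g (t+2) ⟨t+1-1, by omega⟩ = σ := by
    rw [hσdef, sN_eq g (t+2) (by omega) (by omega)]
  have m1 := MStep.stab (g := g) (n := t+1) hn β Ω 1 (Or.inl rfl)
  rw [zpow_one] at m1
  rw [hs] at m1
  have e1 : T * inc g (t+1) β * σ⁻¹ = inc g (t+1) β * σ * inc g (t+1) Ω := by
    rw [hcom β, hTσ]; group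
  rw [← e1] at m1
  have m2 := MStep.conj (g := g) (n := t+2) (T * inc g (t+1) β * σ⁻¹) ⟨t, by omega⟩
  have hs2 : ss g (t+2) ⟨t, by omega⟩ = σ := by
    rw [hσdef, sN_eq g (t+2) (by omega) (by omega)]
    congr 1
  rw [hs2] at m2
  have e2 : σ⁻¹ * (T * inc g (t+1) β * σ⁻¹) * σ = inc g (t+1) Ω * σ * inc g (t+1) β := by
    rw [hTσ]; group
  rw [e2] at m2
  have m3 := MStep.stab (g := g) (n := t+1) hn Ω β 1 (Or.inl rfl)
  rw [zpow_one] at m3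
  rw [hs] at m3
  exact Relation.EqvGen.trans _ _ _ (Relation.EqvGen.rel _ _ m1)
    (Relation.EqvGen.trans _ _ _ (Relation.EqvGen.symm _ _ (Relation.EqvGen.rel _ _ m2))
      (Relation.EqvGen.symm _ _ (Relation.EqvGen.rel _ _ m3)))
/-- Lemma 3: for every `α ∈ B_{g,n}` and the maximal loop
`ω = a_1 ⋯ a_g`, the braids `αω` and `ωα` are Markov equivalent. -/
theorem maxLoop_conjugation_markov (g n : ℕ) (hn : 1 ≤ n) (α : HB g n) :
    MarkovEq g ⟨n, α * maxLoop g n⟩ ⟨n, maxLoop g n * α⟩ := by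
  have key := key_step g n hn ((uP g n (n-1))⁻¹ * α * (dP g n (n-1))⁻¹)
  have e1 : ((uP g n (n-1))⁻¹ * α * (dP g n (n-1))⁻¹) *
      (dP g n (n-1) * maxLoop g n * uP g n (n-1)) =
      (uP g n (n-1))⁻¹ * (α * maxLoop g n) * uP g n (n-1) := by group
  have e2 : (dP g n (n-1) * maxLoop g n * uP g n (n-1)) *
      ((uP g n (n-1))⁻¹ * α * (dP g n (n-1))⁻¹) =
      dP g n (n-1) * (maxLoop g n * α) * (dP g n (n-1))⁻¹ := by group
  rw [e1, e2] at key
  have c1 := markov_conj g n (inv_mem (uP_mem g n (n-1))) (α * maxLoop g n)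
  rw [inv_inv] at c1
  have c2 := markov_conj g n (dP_mem g n (n-1)) (maxLoop g n * α)
  exact Relation.EqvGen.trans _ _ _ (Relation.EqvGen.symm _ _ c1)
    (Relation.EqvGen.trans _ _ _ key c2)
end
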